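/- For every n ≥ 0, the rational number u_n satisfies |u_n| ≤ (9/5)^n. -/
import Mathlib


/-- Plane binary trees: a leaf, or an ordered pair of plane binary trees. -/
inductive PTree : Type where
  | leaf : PTree
  | node : PTree → PTree → PTree
deriving DecidableEq

namespace PTree

/-- Number of leaves of a plane binary tree. -/
def leaves : PTree → ℕ
  | leaf => 1
  | node l r => leaves l + leaves r

/-- Number of root ancestral configurations:
`c(leaf) = 0`, `c(node l r) = (c l + 1) * (c r + 1)`. -/
def c : PTree → ℕ
  | leaf => 0
  | node l r => (c l + 1) * (c r + 1)

/-- The finite set of plane binary trees with `n` leaves. -/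
def trees : ℕ → Finset PTree
  | 0 => ∅
  | 1 => {leaf}
  | (n+2) =>
      (Finset.Icc 1 (n+1)).attach.biUnion fun j =>
        ((trees j.1) ×ˢ (trees (n+2-j.1))).image fun p => node p.1 p.2
decreasing_by
  · have h := Finset.mem_Icc.mp j.2; omega
  · have h := Finset.mem_Icc.mp j.2; omega

end PTree

namespace PTree

/-- Yule–Harding weight: `w(leaf) = 1`,
`w(node l r) = w l * w r / (leaves l + leaves r - 1)`. -/
def w : PTree → ℚ
  | leaf => 1
  | node l r => w l * w r / ((leaves l + leaves r - 1 : ℕ) : ℚ)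

end PTree

namespace PTree

/-- Yule–Harding mean number of root configurations (`e 0 = 0` since `trees 0 = ∅`). -/
def e (n : ℕ) : ℚ := ∑ t ∈ trees n, w t * (c t : ℚ)

end PTree

namespace PTree

/-- The coefficient sequence `u`: `u 0 = 1`, `u 1 = 0`, and for `n ≥ 2` the recurrence
`u n = (1/(n(n-1)))·Σ_{k<n} (3n-k-3)·u k − (4/(n(n-1)))·Σ_{k<n} (n-2k-1)·e_{n-k}·u k
      + (4/(n(n-1)))·Σ_{k<n} (Σ_{j<n-k} e j)·u k`. -/
def u : ℕ → ℚ
  | 0 => 1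
  | 1 => 0
  | (n+2) =>
      (1 / (((n:ℚ)+2) * ((n:ℚ)+1))) *
        ∑ k ∈ (Finset.range (n+2)).attach, (3*((n:ℚ)+2) - (k.1:ℚ) - 3) * u k.1
    - (4 / (((n:ℚ)+2) * ((n:ℚ)+1))) *
        ∑ k ∈ (Finset.range (n+2)).attach,
          (((n:ℚ)+2) - 2*(k.1:ℚ) - 1) * e (n+2-k.1) * u k.1
    + (4 / (((n:ℚ)+2) * ((n:ℚ)+1))) *
        ∑ k ∈ (Finset.range (n+2)).attach,
          (∑ j ∈ Finset.range (n+2-k.1), e j) * u k.1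
decreasing_by
  all_goals exact Finset.mem_range.mp k.2

end PTree

namespace PTree

theorem leaves_of_mem : ∀ (n : ℕ) (t : PTree), t ∈ trees n → leaves t = n := by
  intro n
  induction n using Nat.strong_induction_on with
  | _ n ih =>
    match n with
    | 0 => intro t ht; simp [trees] at ht
    | 1 => intro t ht; simp [trees] at ht; subst ht; rfl
    | (m+2) =>
      intro t ht
      rw [trees] at ht
      simp only [Finset.mem_biUnion, Finset.mem_attach, Finset.mem_image,
        Finset.mem_product, true_and] at ht
      obtain ⟨⟨j, hj⟩, ⟨⟨l, r⟩, ⟨hl, hr⟩, rfl⟩⟩ := ht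
      have hj' := Finset.mem_Icc.mp hj
      have h1 : leaves l = j := ih j (by omega) l hl
      have h2 : leaves r = m + 2 - j := ih (m+2-j) (by omega) r hr
      simp [leaves, h1, h2]; omega

/-- Decomposition of sums over `trees (n+2)`. -/
theorem sum_trees_succ (n : ℕ) (g : PTree → ℚ) :
    ∑ t ∈ trees (n+2), g t
      = ∑ j ∈ Finset.Icc 1 (n+1), ∑ l ∈ trees j, ∑ r ∈ trees (n+2-j), g (node l r) := by
  rw [trees]
  rw [Finset.sum_biUnion]
  · rw [← Finset.sum_attach (Finset.Icc 1 (n+1))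
      (fun j => ∑ l ∈ trees j, ∑ r ∈ trees (n+2-j), g (node l r))]
    refine Finset.sum_congr rfl fun j _ => ?_
    rw [Finset.sum_image]
    · rw [Finset.sum_product]
    · rintro ⟨a, b⟩ hab ⟨a', b'⟩ hab' h
      simp only [PTree.node.injEq] at h
      exact Prod.ext h.1 h.2
  · rintro ⟨j, hj⟩ - ⟨j', hj'⟩ - hne
    simp only [Function.onFun]
    apply Finset.disjoint_left.mpr
    rintro t ht ht'
    simp only [Finset.mem_image, Finset.mem_product] at ht ht'
    obtain ⟨⟨a, b⟩, ⟨ha, hb⟩, rfl⟩ := ht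
    obtain ⟨⟨a', b'⟩, ⟨ha', hb'⟩, h⟩ := ht'
    simp only [PTree.node.injEq] at h
    apply hne
    have h1 := leaves_of_mem j a ha
    have h2 := leaves_of_mem j' a' ha'
    have : j = j' := by rw [← h1, ← h2, h.1]
    subst this
    rfl


theorem w_nonneg : ∀ t : PTree, 0 ≤ w t := by
  intro t
  induction t with
  | leaf => norm_num [w]
  | node l r hl hr =>
    rw [w]
    positivity

theorem e_nonneg (n : ℕ) : 0 ≤ e n := by
  apply Finset.sum_nonneg
  intro t _
  exact mul_nonneg (w_nonneg t) (by positivity)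

theorem sum_w : ∀ n : ℕ, 1 ≤ n → ∑ t ∈ trees n, w t = 1 := by
  intro n
  induction n using Nat.strong_induction_on with
  | _ n ih =>
    match n with
    | 0 => omega
    | 1 => intro _; simp [trees, w]
    | (m+2) =>
      intro _
      rw [sum_trees_succ]
      have key : ∀ j ∈ Finset.Icc 1 (m+1),
          (∑ l ∈ trees j, ∑ r ∈ trees (m+2-j), w (node l r)) = 1/((m:ℚ)+1) := by
        intro j hj
        have hj' := Finset.mem_Icc.mp hj
        have : ∀ l ∈ trees j, ∀ r ∈ trees (m+2-j),
            w (node l r) = w l * w r / ((m:ℚ)+1) := by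
          intro l hl r hr
          rw [w]
          have h1 := leaves_of_mem j l hl
          have h2 := leaves_of_mem (m+2-j) r hr
          have : leaves l + leaves r - 1 = m + 1 := by omega
          rw [this]
          push_cast
          ring_nf
        calc ∑ l ∈ trees j, ∑ r ∈ trees (m+2-j), w (node l r)
            = ∑ l ∈ trees j, ∑ r ∈ trees (m+2-j), w l * w r / ((m:ℚ)+1) := by
              refine Finset.sum_congr rfl fun l hl => Finset.sum_congr rfl fun r hr => ?_
              exact this l hl r hr
          _ = (∑ l ∈ trees j, w l) * (∑ r ∈ trees (m+2-j), w r) / ((m:ℚ)+1) := by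
              rw [Finset.sum_mul_sum]
              rw [Finset.sum_div]
              refine Finset.sum_congr rfl fun l _ => ?_
              rw [Finset.sum_div]
          _ = 1/((m:ℚ)+1) := by
              rw [ih j (by omega) (by omega), ih (m+2-j) (by omega) (by omega)]
              norm_num
      rw [Finset.sum_congr rfl key]
      rw [Finset.sum_const]
      simp only [Nat.card_Icc]
      rw [nsmul_eq_mul]
      push_cast
      have : ((m:ℚ)+1) ≠ 0 := by positivity
      field_simp

theorem sum_wc (j : ℕ) (hj : 1 ≤ j) :
    ∑ t ∈ trees j, w t * ((c t : ℚ) + 1) = e j + 1 := by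
  simp only [mul_add, mul_one, Finset.sum_add_distrib]
  rw [sum_w j hj, ← e]

theorem e_rec (n : ℕ) :
    e (n+2) = (1/((n:ℚ)+1)) *
      ∑ j ∈ Finset.range (n+1), (e (j+1) + 1) * (e (n+1-j) + 1) := by
  rw [e, sum_trees_succ]
  have key : ∀ j ∈ Finset.Icc 1 (n+1),
      (∑ l ∈ trees j, ∑ r ∈ trees (n+2-j), w (node l r) * ((c (node l r) : ℚ)))
        = (e j + 1) * (e (n+2-j) + 1) / ((n:ℚ)+1) := by
    intro j hj
    have hj' := Finset.mem_Icc.mp hj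
    have step : ∀ l ∈ trees j, ∀ r ∈ trees (n+2-j),
        w (node l r) * ((c (node l r) : ℚ))
          = (w l * ((c l : ℚ)+1)) * (w r * ((c r : ℚ)+1)) / ((n:ℚ)+1) := by
      intro l hl r hr
      rw [w, c]
      have h1 := leaves_of_mem j l hl
      have h2 := leaves_of_mem (n+2-j) r hr
      have h3 : leaves l + leaves r - 1 = n + 1 := by omega
      rw [h3]
      push_cast
      ring
    calc ∑ l ∈ trees j, ∑ r ∈ trees (n+2-j), w (node l r) * ((c (node l r) : ℚ))
        = ∑ l ∈ trees j, ∑ r ∈ trees (n+2-j),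
            (w l * ((c l : ℚ)+1)) * (w r * ((c r : ℚ)+1)) / ((n:ℚ)+1) := by
          refine Finset.sum_congr rfl fun l hl => Finset.sum_congr rfl fun r hr => ?_
          exact step l hl r hr
      _ = (∑ l ∈ trees j, w l * ((c l : ℚ)+1)) * (∑ r ∈ trees (n+2-j), w r * ((c r : ℚ)+1))
            / ((n:ℚ)+1) := by
          rw [Finset.sum_mul_sum, Finset.sum_div]
          refine Finset.sum_congr rfl fun l _ => ?_
          rw [Finset.sum_div]
      _ = (e j + 1) * (e (n+2-j) + 1) / ((n:ℚ)+1) := by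
          rw [sum_wc j (by omega), sum_wc (n+2-j) (by omega)]
  rw [Finset.sum_congr rfl key]
  have hIco : Finset.Icc 1 (n+1) = Finset.Ico 1 (n+2) := by
    ext x; simp [Finset.mem_Icc, Finset.mem_Ico]; omega
  rw [hIco, Finset.sum_Ico_eq_sum_range]
  have hr : n + 2 - 1 = n + 1 := by omega
  rw [hr]
  rw [Finset.mul_sum]
  refine Finset.sum_congr rfl fun i hi => ?_
  have hi' := Finset.mem_range.mp hi
  have : n + 2 - (1 + i) = n + 1 - i := by omega
  rw [this]
  have : 1 + i = i + 1 := by omega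
  rw [this]
  ring


theorem e_val_0 : e 0 = 0 := by simp [e, trees]

theorem e_val_1 : e 1 = 0 := by simp [e, trees, c]

theorem e_val_2 : e 2 = 1/1 := by
  rw [show (2:ℕ) = 0+2 from rfl, e_rec]
  norm_num [Finset.sum_range_succ, e_val_1]

theorem e_val_3 : e 3 = 2/1 := by
  rw [show (3:ℕ) = 1+2 from rfl, e_rec]
  norm_num [Finset.sum_range_succ, e_val_1, e_val_2]

theorem e_val_4 : e 4 = 10/3 := by
  rw [show (4:ℕ) = 2+2 from rfl, e_rec]
  norm_num [Finset.sum_range_succ, e_val_1, e_val_2, e_val_3]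

theorem e_val_5 : e 5 = 31/6 := by
  rw [show (5:ℕ) = 3+2 from rfl, e_rec]
  norm_num [Finset.sum_range_succ, e_val_1, e_val_2, e_val_3, e_val_4]

theorem e_val_6 : e 6 = 116/15 := by
  rw [show (6:ℕ) = 4+2 from rfl, e_rec]
  norm_num [Finset.sum_range_succ, e_val_1, e_val_2, e_val_3, e_val_4, e_val_5]

theorem e_val_7 : e 7 = 511/45 := by
  rw [show (7:ℕ) = 5+2 from rfl, e_rec]
  norm_num [Finset.sum_range_succ, e_val_1, e_val_2, e_val_3, e_val_4, e_val_5, e_val_6]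

theorem e_val_8 : e 8 = 742/45 := by
  rw [show (8:ℕ) = 6+2 from rfl, e_rec]
  norm_num [Finset.sum_range_succ, e_val_1, e_val_2, e_val_3, e_val_4, e_val_5, e_val_6, e_val_7]

theorem e_val_9 : e 9 = 8561/360 := by
  rw [show (9:ℕ) = 7+2 from rfl, e_rec]
  norm_num [Finset.sum_range_succ, e_val_1, e_val_2, e_val_3, e_val_4, e_val_5, e_val_6, e_val_7, e_val_8]

theorem e_val_10 : e 10 = 9221/270 := by
  rw [show (10:ℕ) = 8+2 from rfl, e_rec]
  norm_num [Finset.sum_range_succ, e_val_1, e_val_2, e_val_3, e_val_4, e_val_5, e_val_6, e_val_7, e_val_8, e_val_9]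

theorem e_val_11 : e 11 = 132071/2700 := by
  rw [show (11:ℕ) = 9+2 from rfl, e_rec]
  norm_num [Finset.sum_range_succ, e_val_1, e_val_2, e_val_3, e_val_4, e_val_5, e_val_6, e_val_7, e_val_8, e_val_9, e_val_10]

theorem e_val_12 : e 12 = 692413/9900 := by
  rw [show (12:ℕ) = 10+2 from rfl, e_rec]
  norm_num [Finset.sum_range_succ, e_val_1, e_val_2, e_val_3, e_val_4, e_val_5, e_val_6, e_val_7, e_val_8, e_val_9, e_val_10, e_val_11]

theorem e_val_13 : e 13 = 474695/4752 := by
  rw [show (13:ℕ) = 11+2 from rfl, e_rec]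
  norm_num [Finset.sum_range_succ, e_val_1, e_val_2, e_val_3, e_val_4, e_val_5, e_val_6, e_val_7, e_val_8, e_val_9, e_val_10, e_val_11, e_val_12]

theorem e_val_14 : e 14 = 12703261/89100 := by
  rw [show (14:ℕ) = 12+2 from rfl, e_rec]
  norm_num [Finset.sum_range_succ, e_val_1, e_val_2, e_val_3, e_val_4, e_val_5, e_val_6, e_val_7, e_val_8, e_val_9, e_val_10, e_val_11, e_val_12, e_val_13]

theorem e_val_15 : e 15 = 30509/150 := by
  rw [show (15:ℕ) = 13+2 from rfl, e_rec]
  norm_num [Finset.sum_range_succ, e_val_1, e_val_2, e_val_3, e_val_4, e_val_5, e_val_6, e_val_7, e_val_8, e_val_9, e_val_10, e_val_11, e_val_12, e_val_13, e_val_14]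

theorem e_val_16 : e 16 = 70487551/243000 := by
  rw [show (16:ℕ) = 14+2 from rfl, e_rec]
  norm_num [Finset.sum_range_succ, e_val_1, e_val_2, e_val_3, e_val_4, e_val_5, e_val_6, e_val_7, e_val_8, e_val_9, e_val_10, e_val_11, e_val_12, e_val_13, e_val_14, e_val_15]

theorem e_val_17 : e 17 = 17689288319/42768000 := by
  rw [show (17:ℕ) = 15+2 from rfl, e_rec]
  norm_num [Finset.sum_range_succ, e_val_1, e_val_2, e_val_3, e_val_4, e_val_5, e_val_6, e_val_7, e_val_8, e_val_9, e_val_10, e_val_11, e_val_12, e_val_13, e_val_14, e_val_15, e_val_16]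

theorem e_val_18 : e 18 = 2436000299/4131000 := by
  rw [show (18:ℕ) = 16+2 from rfl, e_rec]
  norm_num [Finset.sum_range_succ, e_val_1, e_val_2, e_val_3, e_val_4, e_val_5, e_val_6, e_val_7, e_val_8, e_val_9, e_val_10, e_val_11, e_val_12, e_val_13, e_val_14, e_val_15, e_val_16, e_val_17]

theorem e_val_19 : e 19 = 61120293203/72705600 := by
  rw [show (19:ℕ) = 17+2 from rfl, e_rec]
  norm_num [Finset.sum_range_succ, e_val_1, e_val_2, e_val_3, e_val_4, e_val_5, e_val_6, e_val_7, e_val_8, e_val_9, e_val_10, e_val_11, e_val_12, e_val_13, e_val_14, e_val_15, e_val_16, e_val_17, e_val_18]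

theorem e_val_20 : e 20 = 435640318357/363528000 := by
  rw [show (20:ℕ) = 18+2 from rfl, e_rec]
  norm_num [Finset.sum_range_succ, e_val_1, e_val_2, e_val_3, e_val_4, e_val_5, e_val_6, e_val_7, e_val_8, e_val_9, e_val_10, e_val_11, e_val_12, e_val_13, e_val_14, e_val_15, e_val_16, e_val_17, e_val_18, e_val_19]

theorem e_val_21 : e 21 = 37259522243513/21811680000 := by
  rw [show (21:ℕ) = 19+2 from rfl, e_rec]
  norm_num [Finset.sum_range_succ, e_val_1, e_val_2, e_val_3, e_val_4, e_val_5, e_val_6, e_val_7, e_val_8, e_val_9, e_val_10, e_val_11, e_val_12, e_val_13, e_val_14, e_val_15, e_val_16, e_val_17, e_val_18, e_val_19, e_val_20]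

theorem e_val_22 : e 22 = 13277791708579/5452920000 := by
  rw [show (22:ℕ) = 20+2 from rfl, e_rec]
  norm_num [Finset.sum_range_succ, e_val_1, e_val_2, e_val_3, e_val_4, e_val_5, e_val_6, e_val_7, e_val_8, e_val_9, e_val_10, e_val_11, e_val_12, e_val_13, e_val_14, e_val_15, e_val_16, e_val_17, e_val_18, e_val_19, e_val_20, e_val_21]

theorem e_val_23 : e 23 = 312285887074399/89973180000 := by
  rw [show (23:ℕ) = 21+2 from rfl, e_rec]
  norm_num [Finset.sum_range_succ, e_val_1, e_val_2, e_val_3, e_val_4, e_val_5, e_val_6, e_val_7, e_val_8, e_val_9, e_val_10, e_val_11, e_val_12, e_val_13, e_val_14, e_val_15, e_val_16, e_val_17, e_val_18, e_val_19, e_val_20, e_val_21, e_val_22]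

theorem e_val_24 : e 24 = 1516754109056963/306575280000 := by
  rw [show (24:ℕ) = 22+2 from rfl, e_rec]
  norm_num [Finset.sum_range_succ, e_val_1, e_val_2, e_val_3, e_val_4, e_val_5, e_val_6, e_val_7, e_val_8, e_val_9, e_val_10, e_val_11, e_val_12, e_val_13, e_val_14, e_val_15, e_val_16, e_val_17, e_val_18, e_val_19, e_val_20, e_val_21, e_val_22, e_val_23]

theorem e_one : e 1 = 0 := e_val_1

theorem ebound : ∀ n : ℕ, 1 ≤ n → e n + 1 ≤ (9/10 : ℚ) * (3/2)^n := by
  intro n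
  induction n using Nat.strong_induction_on with
  | _ n ih =>
    match n with
    | 0 => omega
    | 1 => intro _; rw [e_val_1]; norm_num
    | (m+2) =>
      intro _
      rw [e_rec]
      have hterm : ∀ j ∈ Finset.range (m+1),
          (e (j+1) + 1) * (e (m+1-j) + 1) ≤ (81/100 : ℚ) * (3/2)^(m+2) := by
        intro j hj
        have hj' := Finset.mem_range.mp hj
        have h1 := ih (j+1) (by omega) (by omega)
        have h2 := ih (m+1-j) (by omega) (by omega)
        have hnn1 : (0:ℚ) ≤ e (j+1) + 1 := by have := e_nonneg (j+1); linarith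
        have hnn2 : (0:ℚ) ≤ e (m+1-j) + 1 := by have := e_nonneg (m+1-j); linarith
        calc (e (j+1) + 1) * (e (m+1-j) + 1)
            ≤ ((9/10 : ℚ) * (3/2)^(j+1)) * ((9/10 : ℚ) * (3/2)^(m+1-j)) := by
              apply mul_le_mul h1 h2 hnn2 (by positivity)
          _ = (81/100 : ℚ) * ((3/2:ℚ)^((j+1) + (m+1-j))) := by
              rw [pow_add]; ring
          _ = (81/100 : ℚ) * (3/2)^(m+2) := by
              rw [show (j+1) + (m+1-j) = m+2 by omega]
      have hsum : ∑ j ∈ Finset.range (m+1), (e (j+1) + 1) * (e (m+1-j) + 1)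
          ≤ ((m:ℚ)+1) * ((81/100 : ℚ) * (3/2)^(m+2)) := by
        calc ∑ j ∈ Finset.range (m+1), (e (j+1) + 1) * (e (m+1-j) + 1)
            ≤ ∑ _j ∈ Finset.range (m+1), (81/100 : ℚ) * (3/2)^(m+2) :=
              Finset.sum_le_sum hterm
          _ = ((m:ℚ)+1) * ((81/100 : ℚ) * (3/2)^(m+2)) := by
              rw [Finset.sum_const, Finset.card_range, nsmul_eq_mul]
              push_cast; ring
      have hm : (0:ℚ) < (m:ℚ)+1 := by positivity
      have step1 : (1/((m:ℚ)+1)) *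
          (∑ j ∈ Finset.range (m+1), (e (j+1) + 1) * (e (m+1-j) + 1))
            ≤ (81/100 : ℚ) * (3/2)^(m+2) := by
        rw [div_mul_eq_mul_div, one_mul, div_le_iff₀ hm]
        calc ∑ j ∈ Finset.range (m+1), (e (j+1) + 1) * (e (m+1-j) + 1)
            ≤ ((m:ℚ)+1) * ((81/100 : ℚ) * (3/2)^(m+2)) := hsum
          _ = (81/100 : ℚ) * (3/2)^(m+2) * ((m:ℚ)+1) := by ring
      by_cases h6 : 6 ≤ m + 2
      · have h : (100/9 : ℚ) ≤ (3/2)^(m+2) :=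
          calc (100/9 : ℚ) ≤ (3/2:ℚ)^6 := by norm_num
            _ ≤ (3/2:ℚ)^(m+2) := by
              apply pow_le_pow_right₀ (by norm_num) (by omega)
        have : (1:ℚ) ≤ (9/100) * (3/2)^(m+2) := by nlinarith
        linarith
      · have hm4 : m < 4 := by omega
        interval_cases m
        · norm_num [Finset.sum_range_succ, e_val_1]
        · norm_num [Finset.sum_range_succ, e_val_1, e_val_2]
        · norm_num [Finset.sum_range_succ, e_val_1, e_val_2, e_val_3]
        · norm_num [Finset.sum_range_succ, e_val_1, e_val_2, e_val_3, e_val_4]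

theorem ebound' : ∀ n : ℕ, e n ≤ (9/10 : ℚ) * (3/2)^n := by
  intro n
  match n with
  | 0 => rw [e_val_0]; norm_num
  | (m+1) =>
    have h := ebound (m+1) (by omega)
    linarith


theorem u_eq (n : ℕ) :
    u (n+2) =
      (1 / (((n:ℚ)+2) * ((n:ℚ)+1))) *
        ∑ k ∈ Finset.range (n+2), (3*((n:ℚ)+2) - (k:ℚ) - 3) * u k
    - (4 / (((n:ℚ)+2) * ((n:ℚ)+1))) *
        ∑ k ∈ Finset.range (n+2), (((n:ℚ)+2) - 2*(k:ℚ) - 1) * e (n+2-k) * u k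
    + (4 / (((n:ℚ)+2) * ((n:ℚ)+1))) *
        ∑ k ∈ Finset.range (n+2), (∑ j ∈ Finset.range (n+2-k), e j) * u k := by
  rw [u]
  rw [Finset.sum_attach (Finset.range (n+2)) (fun k => (3*((n:ℚ)+2) - (k:ℚ) - 3) * u k)]
  rw [Finset.sum_attach (Finset.range (n+2))
    (fun k => (((n:ℚ)+2) - 2*(k:ℚ) - 1) * e (n+2-k) * u k)]
  rw [Finset.sum_attach (Finset.range (n+2))
    (fun k => (∑ j ∈ Finset.range (n+2-k), e j) * u k)]

theorem u_val_0 : u 0 = 1 := by rw [u]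

theorem u_val_1 : u 1 = 0 := by rw [u]

theorem u_val_2 : u 2 = -1/2 := by
  rw [show (2:ℕ) = 0+2 from rfl, u_eq]
  norm_num [Finset.sum_range_succ, u_val_0, u_val_1, e_val_0, e_val_1, e_val_2]

theorem u_val_3 : u 3 = -4/3 := by
  rw [show (3:ℕ) = 1+2 from rfl, u_eq]
  norm_num [Finset.sum_range_succ, u_val_0, u_val_1, u_val_2, e_val_0, e_val_1, e_val_2, e_val_3]

theorem u_val_4 : u 4 = -65/24 := by
  rw [show (4:ℕ) = 2+2 from rfl, u_eq]
  norm_num [Finset.sum_range_succ, u_val_0, u_val_1, u_val_2, u_val_3, e_val_0, e_val_1, e_val_2, e_val_3, e_val_4]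

theorem u_val_5 : u 5 = -29/6 := by
  rw [show (5:ℕ) = 3+2 from rfl, u_eq]
  norm_num [Finset.sum_range_succ, u_val_0, u_val_1, u_val_2, u_val_3, u_val_4, e_val_0, e_val_1, e_val_2, e_val_3, e_val_4, e_val_5]

theorem u_val_6 : u 6 = -1937/240 := by
  rw [show (6:ℕ) = 4+2 from rfl, u_eq]
  norm_num [Finset.sum_range_succ, u_val_0, u_val_1, u_val_2, u_val_3, u_val_4, u_val_5, e_val_0, e_val_1, e_val_2, e_val_3, e_val_4, e_val_5, e_val_6]

theorem u_val_7 : u 7 = -1809/140 := by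
  rw [show (7:ℕ) = 5+2 from rfl, u_eq]
  norm_num [Finset.sum_range_succ, u_val_0, u_val_1, u_val_2, u_val_3, u_val_4, u_val_5, u_val_6, e_val_0, e_val_1, e_val_2, e_val_3, e_val_4, e_val_5, e_val_6, e_val_7]

theorem u_val_8 : u 8 = -54017/2688 := by
  rw [show (8:ℕ) = 6+2 from rfl, u_eq]
  norm_num [Finset.sum_range_succ, u_val_0, u_val_1, u_val_2, u_val_3, u_val_4, u_val_5, u_val_6, u_val_7, e_val_0, e_val_1, e_val_2, e_val_3, e_val_4, e_val_5, e_val_6, e_val_7, e_val_8]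

theorem u_val_9 : u 9 = -66083/2160 := by
  rw [show (9:ℕ) = 7+2 from rfl, u_eq]
  norm_num [Finset.sum_range_succ, u_val_0, u_val_1, u_val_2, u_val_3, u_val_4, u_val_5, u_val_6, u_val_7, u_val_8, e_val_0, e_val_1, e_val_2, e_val_3, e_val_4, e_val_5, e_val_6, e_val_7, e_val_8, e_val_9]

theorem u_val_10 : u 10 = -7917701/172800 := by
  rw [show (10:ℕ) = 8+2 from rfl, u_eq]
  norm_num [Finset.sum_range_succ, u_val_0, u_val_1, u_val_2, u_val_3, u_val_4, u_val_5, u_val_6, u_val_7, u_val_8, u_val_9, e_val_0, e_val_1, e_val_2, e_val_3, e_val_4, e_val_5, e_val_6, e_val_7, e_val_8, e_val_9, e_val_10]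

theorem u_val_11 : u 11 = -56327639/831600 := by
  rw [show (11:ℕ) = 9+2 from rfl, u_eq]
  norm_num [Finset.sum_range_succ, u_val_0, u_val_1, u_val_2, u_val_3, u_val_4, u_val_5, u_val_6, u_val_7, u_val_8, u_val_9, u_val_10, e_val_0, e_val_1, e_val_2, e_val_3, e_val_4, e_val_5, e_val_6, e_val_7, e_val_8, e_val_9, e_val_10, e_val_11]

theorem u_val_12 : u 12 = -210894737/2128896 := by
  rw [show (12:ℕ) = 10+2 from rfl, u_eq]
  norm_num [Finset.sum_range_succ, u_val_0, u_val_1, u_val_2, u_val_3, u_val_4, u_val_5, u_val_6, u_val_7, u_val_8, u_val_9, u_val_10, u_val_11, e_val_0, e_val_1, e_val_2, e_val_3, e_val_4, e_val_5, e_val_6, e_val_7, e_val_8, e_val_9, e_val_10, e_val_11, e_val_12]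

theorem u_val_13 : u 13 = -709608089/4942080 := by
  rw [show (13:ℕ) = 11+2 from rfl, u_eq]
  norm_num [Finset.sum_range_succ, u_val_0, u_val_1, u_val_2, u_val_3, u_val_4, u_val_5, u_val_6, u_val_7, u_val_8, u_val_9, u_val_10, u_val_11, u_val_12, e_val_0, e_val_1, e_val_2, e_val_3, e_val_4, e_val_5, e_val_6, e_val_7, e_val_8, e_val_9, e_val_10, e_val_11, e_val_12, e_val_13]

theorem u_val_14 : u 14 = -857310496543/4151347200 := by
  rw [show (14:ℕ) = 12+2 from rfl, u_eq]
  norm_num [Finset.sum_range_succ, u_val_0, u_val_1, u_val_2, u_val_3, u_val_4, u_val_5, u_val_6, u_val_7, u_val_8, u_val_9, u_val_10, u_val_11, u_val_12, u_val_13, e_val_0, e_val_1, e_val_2, e_val_3, e_val_4, e_val_5, e_val_6, e_val_7, e_val_8, e_val_9, e_val_10, e_val_11, e_val_12, e_val_13, e_val_14]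

theorem u_val_15 : u 15 = -4592678269771/15567552000 := by
  rw [show (15:ℕ) = 13+2 from rfl, u_eq]
  norm_num [Finset.sum_range_succ, u_val_0, u_val_1, u_val_2, u_val_3, u_val_4, u_val_5, u_val_6, u_val_7, u_val_8, u_val_9, u_val_10, u_val_11, u_val_12, u_val_13, u_val_14, e_val_0, e_val_1, e_val_2, e_val_3, e_val_4, e_val_5, e_val_6, e_val_7, e_val_8, e_val_9, e_val_10, e_val_11, e_val_12, e_val_13, e_val_14, e_val_15]

theorem u_val_16 : u 16 = -1806759073637/4313088000 := by
  rw [show (16:ℕ) = 14+2 from rfl, u_eq]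
  norm_num [Finset.sum_range_succ, u_val_0, u_val_1, u_val_2, u_val_3, u_val_4, u_val_5, u_val_6, u_val_7, u_val_8, u_val_9, u_val_10, u_val_11, u_val_12, u_val_13, u_val_14, u_val_15, e_val_0, e_val_1, e_val_2, e_val_3, e_val_4, e_val_5, e_val_6, e_val_7, e_val_8, e_val_9, e_val_10, e_val_11, e_val_12, e_val_13, e_val_14, e_val_15, e_val_16]

theorem u_val_17 : u 17 = -208733799009457/352864512000 := by
  rw [show (17:ℕ) = 15+2 from rfl, u_eq]
  norm_num [Finset.sum_range_succ, u_val_0, u_val_1, u_val_2, u_val_3, u_val_4, u_val_5, u_val_6, u_val_7, u_val_8, u_val_9, u_val_10, u_val_11, u_val_12, u_val_13, u_val_14, u_val_15, u_val_16, e_val_0, e_val_1, e_val_2, e_val_3, e_val_4, e_val_5, e_val_6, e_val_7, e_val_8, e_val_9, e_val_10, e_val_11, e_val_12, e_val_13, e_val_14, e_val_15, e_val_16, e_val_17]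

theorem u_val_18 : u 18 = -10134984775822997/12194997534720 := by
  rw [show (18:ℕ) = 16+2 from rfl, u_eq]
  norm_num [Finset.sum_range_succ, u_val_0, u_val_1, u_val_2, u_val_3, u_val_4, u_val_5, u_val_6, u_val_7, u_val_8, u_val_9, u_val_10, u_val_11, u_val_12, u_val_13, u_val_14, u_val_15, u_val_16, u_val_17, e_val_0, e_val_1, e_val_2, e_val_3, e_val_4, e_val_5, e_val_6, e_val_7, e_val_8, e_val_9, e_val_10, e_val_11, e_val_12, e_val_13, e_val_14, e_val_15, e_val_16, e_val_17, e_val_18]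

theorem u_val_19 : u 19 = -841386182931493879/724077978624000 := by
  rw [show (19:ℕ) = 17+2 from rfl, u_eq]
  norm_num [Finset.sum_range_succ, u_val_0, u_val_1, u_val_2, u_val_3, u_val_4, u_val_5, u_val_6, u_val_7, u_val_8, u_val_9, u_val_10, u_val_11, u_val_12, u_val_13, u_val_14, u_val_15, u_val_16, u_val_17, u_val_18, e_val_0, e_val_1, e_val_2, e_val_3, e_val_4, e_val_5, e_val_6, e_val_7, e_val_8, e_val_9, e_val_10, e_val_11, e_val_12, e_val_13, e_val_14, e_val_15, e_val_16, e_val_17, e_val_18, e_val_19]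

theorem u_val_20 : u 20 = -3406596036802779467/2106408665088000 := by
  rw [show (20:ℕ) = 18+2 from rfl, u_eq]
  norm_num [Finset.sum_range_succ, u_val_0, u_val_1, u_val_2, u_val_3, u_val_4, u_val_5, u_val_6, u_val_7, u_val_8, u_val_9, u_val_10, u_val_11, u_val_12, u_val_13, u_val_14, u_val_15, u_val_16, u_val_17, u_val_18, u_val_19, e_val_0, e_val_1, e_val_2, e_val_3, e_val_4, e_val_5, e_val_6, e_val_7, e_val_8, e_val_9, e_val_10, e_val_11, e_val_12, e_val_13, e_val_14, e_val_15, e_val_16, e_val_17, e_val_18, e_val_19, e_val_20]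

theorem u_val_21 : u 21 = -1362890914012169929313/608225502044160000 := by
  rw [show (21:ℕ) = 19+2 from rfl, u_eq]
  norm_num [Finset.sum_range_succ, u_val_0, u_val_1, u_val_2, u_val_3, u_val_4, u_val_5, u_val_6, u_val_7, u_val_8, u_val_9, u_val_10, u_val_11, u_val_12, u_val_13, u_val_14, u_val_15, u_val_16, u_val_17, u_val_18, u_val_19, u_val_20, e_val_0, e_val_1, e_val_2, e_val_3, e_val_4, e_val_5, e_val_6, e_val_7, e_val_8, e_val_9, e_val_10, e_val_11, e_val_12, e_val_13, e_val_14, e_val_15, e_val_16, e_val_17, e_val_18, e_val_19, e_val_20, e_val_21]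

theorem u_val_22 : u 22 = -165436304678028195829079/53523844179886080000 := by
  rw [show (22:ℕ) = 20+2 from rfl, u_eq]
  norm_num [Finset.sum_range_succ, u_val_0, u_val_1, u_val_2, u_val_3, u_val_4, u_val_5, u_val_6, u_val_7, u_val_8, u_val_9, u_val_10, u_val_11, u_val_12, u_val_13, u_val_14, u_val_15, u_val_16, u_val_17, u_val_18, u_val_19, u_val_20, u_val_21, e_val_0, e_val_1, e_val_2, e_val_3, e_val_4, e_val_5, e_val_6, e_val_7, e_val_8, e_val_9, e_val_10, e_val_11, e_val_12, e_val_13, e_val_14, e_val_15, e_val_16, e_val_17, e_val_18, e_val_19, e_val_20, e_val_21, e_val_22]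

theorem u_val_23 : u 23 = -26659036957058837731793/6280859266007040000 := by
  rw [show (23:ℕ) = 21+2 from rfl, u_eq]
  norm_num [Finset.sum_range_succ, u_val_0, u_val_1, u_val_2, u_val_3, u_val_4, u_val_5, u_val_6, u_val_7, u_val_8, u_val_9, u_val_10, u_val_11, u_val_12, u_val_13, u_val_14, u_val_15, u_val_16, u_val_17, u_val_18, u_val_19, u_val_20, u_val_21, u_val_22, e_val_0, e_val_1, e_val_2, e_val_3, e_val_4, e_val_5, e_val_6, e_val_7, e_val_8, e_val_9, e_val_10, e_val_11, e_val_12, e_val_13, e_val_14, e_val_15, e_val_16, e_val_17, e_val_18, e_val_19, e_val_20, e_val_21, e_val_22, e_val_23]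

theorem u_val_24 : u 24 = -24488627037879338743200821/4220737426756730880000 := by
  rw [show (24:ℕ) = 22+2 from rfl, u_eq]
  norm_num [Finset.sum_range_succ, u_val_0, u_val_1, u_val_2, u_val_3, u_val_4, u_val_5, u_val_6, u_val_7, u_val_8, u_val_9, u_val_10, u_val_11, u_val_12, u_val_13, u_val_14, u_val_15, u_val_16, u_val_17, u_val_18, u_val_19, u_val_20, u_val_21, u_val_22, u_val_23, e_val_0, e_val_1, e_val_2, e_val_3, e_val_4, e_val_5, e_val_6, e_val_7, e_val_8, e_val_9, e_val_10, e_val_11, e_val_12, e_val_13, e_val_14, e_val_15, e_val_16, e_val_17, e_val_18, e_val_19, e_val_20, e_val_21, e_val_22, e_val_23, e_val_24]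

theorem geo65 (m : ℕ) : ∑ k ∈ Finset.range m, (6/5:ℚ)^k ≤ 5 * (6/5)^m := by
  have hp : (0:ℚ) < (6/5)^m := by positivity
  rw [geom_sum_eq (by norm_num : (6/5:ℚ) ≠ 1)]
  rw [div_le_iff₀ (by norm_num : (0:ℚ) < 6/5 - 1)]
  nlinarith

theorem geo95 (m : ℕ) : ∑ k ∈ Finset.range m, (9/5:ℚ)^k ≤ (5/4) * (9/5)^m := by
  have hp : (0:ℚ) < (9/5)^m := by positivity
  rw [geom_sum_eq (by norm_num : (9/5:ℚ) ≠ 1)]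
  rw [div_le_iff₀ (by norm_num : (0:ℚ) < 9/5 - 1)]
  nlinarith

theorem geo32 (m : ℕ) : ∑ k ∈ Finset.range m, (3/2:ℚ)^k ≤ 2 * (3/2)^m := by
  have hp : (0:ℚ) < (3/2)^m := by positivity
  rw [geom_sum_eq (by norm_num : (3/2:ℚ) ≠ 1)]
  rw [div_le_iff₀ (by norm_num : (0:ℚ) < 3/2 - 1)]
  nlinarith

theorem esum (m : ℕ) : ∑ j ∈ Finset.range m, e j ≤ (9/5:ℚ) * (3/2)^m := by
  calc ∑ j ∈ Finset.range m, e j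
      ≤ ∑ j ∈ Finset.range m, (9/10:ℚ)*(3/2)^j :=
        Finset.sum_le_sum (fun j _ => ebound' j)
    _ = (9/10:ℚ) * ∑ j ∈ Finset.range m, (3/2:ℚ)^j := by rw [Finset.mul_sum]
    _ ≤ (9/10:ℚ) * (2 * (3/2)^m) := by
        have := geo32 m; nlinarith
    _ = (9/5:ℚ) * (3/2)^m := by ring

theorem geo_mix (m : ℕ) :
    ∑ k ∈ Finset.range m, (3/2:ℚ)^(m-k) * (9/5)^k ≤ 5 * (9/5)^m := by
  have key : ∀ k ∈ Finset.range m, (3/2:ℚ)^(m-k) * (9/5)^k = (3/2)^m * (6/5)^k := by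
    intro k hk
    have hk' := Finset.mem_range.mp hk
    have h95 : (9/5:ℚ)^k = (3/2:ℚ)^k * (6/5)^k := by rw [← mul_pow]; norm_num
    rw [h95, ← mul_assoc, ← pow_add, show m - k + k = m by omega]
  rw [Finset.sum_congr rfl key, ← Finset.mul_sum]
  calc (3/2:ℚ)^m * ∑ k ∈ Finset.range m, (6/5:ℚ)^k
      ≤ (3/2:ℚ)^m * (5 * (6/5)^m) :=
        mul_le_mul_of_nonneg_left (geo65 m) (by positivity)
    _ = 5 * ((3/2:ℚ)*(6/5))^m := by rw [mul_pow]; ring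
    _ = 5 * (9/5:ℚ)^m := by norm_num

theorem u_step (n : ℕ) (hn : 23 ≤ n)
    (IH : ∀ k, k < n + 2 → |u k| ≤ (9/5:ℚ)^k) :
    |u (n+2)| ≤ (9/5:ℚ)^(n+2) := by
  have hq : (23:ℚ) ≤ (n:ℚ) := by exact_mod_cast hn
  have hq1 : (0:ℚ) < (n:ℚ) + 1 := by linarith
  have hq2 : (0:ℚ) < (n:ℚ) + 2 := by linarith
  have hP : (0:ℚ) < (9/5:ℚ)^(n+2) := by positivity
  have hkbd : ∀ k ∈ Finset.range (n+2), (k:ℚ) ≤ (n:ℚ) + 1 := by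
    intro k hk
    have h := Finset.mem_range.mp hk
    have : k ≤ n + 1 := by omega
    exact_mod_cast this
  have hS1 : |∑ k ∈ Finset.range (n+2), (3*((n:ℚ)+2) - (k:ℚ) - 3) * u k|
      ≤ 3*((n:ℚ)+2) * ((5/4) * (9/5:ℚ)^(n+2)) := by
    calc |∑ k ∈ Finset.range (n+2), (3*((n:ℚ)+2) - (k:ℚ) - 3) * u k|
        ≤ ∑ k ∈ Finset.range (n+2), |(3*((n:ℚ)+2) - (k:ℚ) - 3) * u k| :=
          Finset.abs_sum_le_sum_abs _ _
      _ ≤ ∑ k ∈ Finset.range (n+2), 3*((n:ℚ)+2) * (9/5:ℚ)^k := by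
          apply Finset.sum_le_sum
          intro k hk
          have hk1 := hkbd k hk
          have hk0 : (0:ℚ) ≤ (k:ℚ) := by positivity
          rw [abs_mul]
          apply mul_le_mul ?_ (IH k (Finset.mem_range.mp hk)) (abs_nonneg _) (by positivity)
          rw [abs_le]
          constructor <;> linarith
      _ = 3*((n:ℚ)+2) * ∑ k ∈ Finset.range (n+2), (9/5:ℚ)^k := by
          rw [Finset.mul_sum]
      _ ≤ 3*((n:ℚ)+2) * ((5/4) * (9/5:ℚ)^(n+2)) :=
          mul_le_mul_of_nonneg_left (geo95 (n+2)) (by positivity)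
  have hS2 : |∑ k ∈ Finset.range (n+2), (((n:ℚ)+2) - 2*(k:ℚ) - 1) * e (n+2-k) * u k|
      ≤ ((n:ℚ)+1) * (9/10) * (5 * (9/5:ℚ)^(n+2)) := by
    calc |∑ k ∈ Finset.range (n+2), (((n:ℚ)+2) - 2*(k:ℚ) - 1) * e (n+2-k) * u k|
        ≤ ∑ k ∈ Finset.range (n+2), |(((n:ℚ)+2) - 2*(k:ℚ) - 1) * e (n+2-k) * u k| :=
          Finset.abs_sum_le_sum_abs _ _
      _ ≤ ∑ k ∈ Finset.range (n+2),
            ((n:ℚ)+1) * (9/10) * ((3/2:ℚ)^(n+2-k) * (9/5:ℚ)^k) := by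
          apply Finset.sum_le_sum
          intro k hk
          have hk1 := hkbd k hk
          have hk0 : (0:ℚ) ≤ (k:ℚ) := by positivity
          rw [abs_mul, abs_mul]
          have he1 : |e (n+2-k)| ≤ (9/10:ℚ)*(3/2)^(n+2-k) := by
            rw [abs_of_nonneg (e_nonneg _)]; exact ebound' _
          have hu := IH k (Finset.mem_range.mp hk)
          have hc : |((n:ℚ)+2) - 2*(k:ℚ) - 1| ≤ (n:ℚ)+1 := by
            rw [abs_le]; constructor <;> linarith
          calc |((n:ℚ)+2) - 2*(k:ℚ) - 1| * |e (n+2-k)| * |u k|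
              ≤ (((n:ℚ)+1) * ((9/10:ℚ)*(3/2)^(n+2-k))) * ((9/5:ℚ)^k) := by
                apply mul_le_mul _ hu (abs_nonneg _) (by positivity)
                apply mul_le_mul hc he1 (abs_nonneg _) (by linarith)
            _ = ((n:ℚ)+1) * (9/10) * ((3/2:ℚ)^(n+2-k) * (9/5:ℚ)^k) := by ring
      _ = ((n:ℚ)+1) * (9/10) *
            ∑ k ∈ Finset.range (n+2), (3/2:ℚ)^(n+2-k) * (9/5:ℚ)^k := by
          rw [Finset.mul_sum]
      _ ≤ ((n:ℚ)+1) * (9/10) * (5 * (9/5:ℚ)^(n+2)) :=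
          mul_le_mul_of_nonneg_left (geo_mix (n+2)) (by positivity)
  have hS3 : |∑ k ∈ Finset.range (n+2), (∑ j ∈ Finset.range (n+2-k), e j) * u k|
      ≤ (9/5:ℚ) * (5 * (9/5:ℚ)^(n+2)) := by
    calc |∑ k ∈ Finset.range (n+2), (∑ j ∈ Finset.range (n+2-k), e j) * u k|
        ≤ ∑ k ∈ Finset.range (n+2), |(∑ j ∈ Finset.range (n+2-k), e j) * u k| :=
          Finset.abs_sum_le_sum_abs _ _
      _ ≤ ∑ k ∈ Finset.range (n+2),
            (9/5:ℚ) * ((3/2:ℚ)^(n+2-k) * (9/5:ℚ)^k) := by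
          apply Finset.sum_le_sum
          intro k hk
          rw [abs_mul]
          have hin : |∑ j ∈ Finset.range (n+2-k), e j| ≤ (9/5:ℚ) * (3/2)^(n+2-k) := by
            rw [abs_of_nonneg (Finset.sum_nonneg fun j _ => e_nonneg j)]
            exact esum _
          calc |∑ j ∈ Finset.range (n+2-k), e j| * |u k|
              ≤ ((9/5:ℚ) * (3/2)^(n+2-k)) * ((9/5:ℚ)^k) := by
                apply mul_le_mul hin (IH k (Finset.mem_range.mp hk)) (abs_nonneg _)
                  (by positivity)
            _ = (9/5:ℚ) * ((3/2:ℚ)^(n+2-k) * (9/5:ℚ)^k) := by ring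
      _ = (9/5:ℚ) * ∑ k ∈ Finset.range (n+2), (3/2:ℚ)^(n+2-k) * (9/5:ℚ)^k := by
          rw [Finset.mul_sum]
      _ ≤ (9/5:ℚ) * (5 * (9/5:ℚ)^(n+2)) :=
          mul_le_mul_of_nonneg_left (geo_mix (n+2)) (by norm_num)
  rw [u_eq]
  have hc1 : (0:ℚ) < 1 / (((n:ℚ)+2) * ((n:ℚ)+1)) := by positivity
  have hc4 : (0:ℚ) < 4 / (((n:ℚ)+2) * ((n:ℚ)+1)) := by positivity
  set A := (1 / (((n:ℚ)+2) * ((n:ℚ)+1))) *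
      ∑ k ∈ Finset.range (n+2), (3*((n:ℚ)+2) - (k:ℚ) - 3) * u k with hA
  set B := (4 / (((n:ℚ)+2) * ((n:ℚ)+1))) *
      ∑ k ∈ Finset.range (n+2), (((n:ℚ)+2) - 2*(k:ℚ) - 1) * e (n+2-k) * u k with hB
  set C := (4 / (((n:ℚ)+2) * ((n:ℚ)+1))) *
      ∑ k ∈ Finset.range (n+2), (∑ j ∈ Finset.range (n+2-k), e j) * u k with hC
  have habs : |A - B + C| ≤ |A| + |B| + |C| := by
    calc |A - B + C| ≤ |A - B| + |C| := abs_add_le _ _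
      _ ≤ |A| + |B| + |C| := by
          have h1 : |A - B| ≤ |A| + |B| := by
            rw [sub_eq_add_neg]
            calc |A + -B| ≤ |A| + |-B| := abs_add_le _ _
              _ = |A| + |B| := by rw [abs_neg]
          linarith
  have hAbd : |A| ≤ (1 / (((n:ℚ)+2) * ((n:ℚ)+1))) *
      (3*((n:ℚ)+2) * ((5/4) * (9/5:ℚ)^(n+2))) := by
    rw [hA, abs_mul, abs_of_pos hc1]
    exact mul_le_mul_of_nonneg_left hS1 hc1.le
  have hBbd : |B| ≤ (4 / (((n:ℚ)+2) * ((n:ℚ)+1))) *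
      (((n:ℚ)+1) * (9/10) * (5 * (9/5:ℚ)^(n+2))) := by
    rw [hB, abs_mul, abs_of_pos hc4]
    exact mul_le_mul_of_nonneg_left hS2 hc4.le
  have hCbd : |C| ≤ (4 / (((n:ℚ)+2) * ((n:ℚ)+1))) *
      ((9/5:ℚ) * (5 * (9/5:ℚ)^(n+2))) := by
    rw [hC, abs_mul, abs_of_pos hc4]
    exact mul_le_mul_of_nonneg_left hS3 hc4.le
  have main : (1 / (((n:ℚ)+2) * ((n:ℚ)+1))) * (3*((n:ℚ)+2) * ((5/4) * (9/5:ℚ)^(n+2)))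
      + (4 / (((n:ℚ)+2) * ((n:ℚ)+1))) * (((n:ℚ)+1) * (9/10) * (5 * (9/5:ℚ)^(n+2)))
      + (4 / (((n:ℚ)+2) * ((n:ℚ)+1))) * ((9/5:ℚ) * (5 * (9/5:ℚ)^(n+2)))
      ≤ (9/5:ℚ)^(n+2) := by
    have hD : (0:ℚ) < ((n:ℚ)+2)*((n:ℚ)+1) := by positivity
    rw [show (1 / (((n:ℚ)+2) * ((n:ℚ)+1))) * (3*((n:ℚ)+2) * ((5/4) * (9/5:ℚ)^(n+2)))
      + (4 / (((n:ℚ)+2) * ((n:ℚ)+1))) * (((n:ℚ)+1) * (9/10) * (5 * (9/5:ℚ)^(n+2)))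
      + (4 / (((n:ℚ)+2) * ((n:ℚ)+1))) * ((9/5:ℚ) * (5 * (9/5:ℚ)^(n+2)))
      = (3*((n:ℚ)+2) * ((5/4) * (9/5:ℚ)^(n+2))
        + 4*(((n:ℚ)+1) * (9/10) * (5 * (9/5:ℚ)^(n+2)))
        + 4*((9/5:ℚ) * (5 * (9/5:ℚ)^(n+2)))) / (((n:ℚ)+2) * ((n:ℚ)+1)) from by
        ring, div_le_iff₀ hD]
    have hpoly : (0:ℚ) ≤ (n:ℚ)*(n:ℚ) - (75/4)*(n:ℚ) - 119/2 := by
      nlinarith [sq_nonneg ((n:ℚ) - 23)]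
    nlinarith [mul_nonneg hP.le hpoly]
  calc |A - B + C| ≤ |A| + |B| + |C| := habs
    _ ≤ (1 / (((n:ℚ)+2) * ((n:ℚ)+1))) * (3*((n:ℚ)+2) * ((5/4) * (9/5:ℚ)^(n+2)))
      + (4 / (((n:ℚ)+2) * ((n:ℚ)+1))) * (((n:ℚ)+1) * (9/10) * (5 * (9/5:ℚ)^(n+2)))
      + (4 / (((n:ℚ)+2) * ((n:ℚ)+1))) * ((9/5:ℚ) * (5 * (9/5:ℚ)^(n+2))) := by
        exact add_le_add (add_le_add hAbd hBbd) hCbd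
    _ ≤ (9/5:ℚ)^(n+2) := main


end PTree

/-- For every `n ≥ 0`, `|u_n| ≤ (9/5)^n`. -/
theorem u_bound : ∀ n : ℕ, |PTree.u n| ≤ (9 / 5 : ℚ) ^ n := by
  intro n
  induction n using Nat.strong_induction_on with
  | _ n ih =>
    by_cases h : n < 25
    · interval_cases n <;>
        first
        | (rw [PTree.u_val_0]; norm_num)
        | (rw [PTree.u_val_1]; norm_num)
        | (rw [PTree.u_val_2, abs_le]; constructor <;> norm_num)
        | (rw [PTree.u_val_3, abs_le]; constructor <;> norm_num)
        | (rw [PTree.u_val_4, abs_le]; constructor <;> norm_num)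
        | (rw [PTree.u_val_5, abs_le]; constructor <;> norm_num)
        | (rw [PTree.u_val_6, abs_le]; constructor <;> norm_num)
        | (rw [PTree.u_val_7, abs_le]; constructor <;> norm_num)
        | (rw [PTree.u_val_8, abs_le]; constructor <;> norm_num)
        | (rw [PTree.u_val_9, abs_le]; constructor <;> norm_num)
        | (rw [PTree.u_val_10, abs_le]; constructor <;> norm_num)
        | (rw [PTree.u_val_11, abs_le]; constructor <;> norm_num)
        | (rw [PTree.u_val_12, abs_le]; constructor <;> norm_num)
        | (rw [PTree.u_val_13, abs_le]; constructor <;> norm_num)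
        | (rw [PTree.u_val_14, abs_le]; constructor <;> norm_num)
        | (rw [PTree.u_val_15, abs_le]; constructor <;> norm_num)
        | (rw [PTree.u_val_16, abs_le]; constructor <;> norm_num)
        | (rw [PTree.u_val_17, abs_le]; constructor <;> norm_num)
        | (rw [PTree.u_val_18, abs_le]; constructor <;> norm_num)
        | (rw [PTree.u_val_19, abs_le]; constructor <;> norm_num)
        | (rw [PTree.u_val_20, abs_le]; constructor <;> norm_num)
        | (rw [PTree.u_val_21, abs_le]; constructor <;> norm_num)
        | (rw [PTree.u_val_22, abs_le]; constructor <;> norm_num)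
        | (rw [PTree.u_val_23, abs_le]; constructor <;> norm_num)
        | (rw [PTree.u_val_24, abs_le]; constructor <;> norm_num)
    · obtain ⟨m, rfl⟩ : ∃ m, n = m + 2 := ⟨n - 2, by omega⟩
      exact PTree.u_step m (by omega) (fun k hk => ih k hk)
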